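/- arXiv:1506.05769 — 2 statements merged into one kernel-verified Lean document; each statement's English description precedes it below -/
import Mathlib

section
/- Let G be a graph, e = xy an edge of G. Let L be the ideal generated by the variables in (N(x) ∪ N(y)) \ {x,y}, and H the induced subgraph of G on V(G) \ (N(x) ∪ N(y)). Then the colon ideal satisfies I(G \ e) : (xy) = L + I(H), where G \ e is the graph G with the edge e removed. -/
/-!
Both sides are monomial ideals, so it suffices to compare the monomials `x^m` they contain, and
for the ideals involved this depends only on the support of `m`: `x^m ∈ I(G)` iff `supp m` is not
an independent set of `G`. Hence `x^m` lies in the colon ideal iff `supp m ∪ {x, y}` is not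
independent in `G \ e`, and in `L + I(H)` iff `supp m` meets `(N(x) ∪ N(y)) \ {x, y}` or is not
independent in `H`. These agree: an edge of `G \ e` inside `supp m ∪ {x, y}` either has an
endpoint in `{x, y}`, and then its other endpoint is a neighbour of `x` or `y` lying in `supp m`,
or lies inside `supp m`, and then it is an edge of `H` unless an endpoint is in `N(x) ∪ N(y)`.
-/

open MvPolynomial

/-- The edge ideal of a graph `G`: the ideal of `k[x_v : v ∈ V]` generated by the products
`x_u x_v` over the edges `{u, v}` of `G`. -/
noncomputable def edgeIdeal (k : Type*) [Field k] {V : Type*} (G : SimpleGraph V) :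
    Ideal (MvPolynomial V k) :=
  Ideal.span {p | ∃ u v : V, G.Adj u v ∧ p = X u * X v}

namespace MvPolynomial

variable {σ R : Type*} [CommSemiring R]

/-- Equivalent to being spanned by monomials: see `isMonomialIdeal_span_monomial_image` and
`IsMonomialIdeal.mem_iff`. -/
def IsMonomialIdeal (I : Ideal (MvPolynomial σ R)) : Prop :=
  ∀ ⦃f⦄, f ∈ I → ∀ m ∈ f.support, monomial m (1 : R) ∈ I

namespace IsMonomialIdeal

variable {I J : Ideal (MvPolynomial σ R)}

theorem mem_iff (hI : IsMonomialIdeal I) {f : MvPolynomial σ R} :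
    f ∈ I ↔ ∀ m ∈ f.support, monomial m (1 : R) ∈ I := by
  refine ⟨fun hf => hI hf, fun h => ?_⟩
  rw [f.as_sum]
  refine Ideal.sum_mem _ fun m hm => ?_
  simpa only [C_mul_monomial, mul_one] using I.mul_mem_left (C (coeff m f)) (h m hm)

theorem ext (hI : IsMonomialIdeal I) (hJ : IsMonomialIdeal J)
    (h : ∀ m, monomial m (1 : R) ∈ I ↔ monomial m 1 ∈ J) : I = J :=
  Ideal.ext fun _ => by rw [hI.mem_iff, hJ.mem_iff]; exact forall₂_congr fun m _ => h m

theorem monomial_mem_of_mem_sup (hI : IsMonomialIdeal I) (hJ : IsMonomialIdeal J)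
    {f : MvPolynomial σ R} (hf : f ∈ I ⊔ J) {m : σ →₀ ℕ} (hm : m ∈ f.support) :
    monomial m (1 : R) ∈ I ∨ monomial m 1 ∈ J := by
  classical
  obtain ⟨a, ha, b, hb, rfl⟩ := Submodule.mem_sup.1 hf
  exact (Finset.mem_union.1 (support_add hm)).imp (hI ha m) (hJ hb m)

theorem sup (hI : IsMonomialIdeal I) (hJ : IsMonomialIdeal J) : IsMonomialIdeal (I ⊔ J) :=
  fun _ hf _ hm =>
    (monomial_mem_of_mem_sup hI hJ hf hm).elim (fun h => Ideal.mem_sup_left h) Ideal.mem_sup_right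

theorem monomial_mem_sup_iff [Nontrivial R] (hI : IsMonomialIdeal I) (hJ : IsMonomialIdeal J)
    {m : σ →₀ ℕ} : monomial m (1 : R) ∈ I ⊔ J ↔ monomial m 1 ∈ I ∨ monomial m 1 ∈ J :=
  ⟨fun h => monomial_mem_of_mem_sup hI hJ h (by classical simp [coeff_monomial]),
    fun h => h.elim (fun h => Ideal.mem_sup_left h) Ideal.mem_sup_right⟩

theorem colon_monomial (hI : IsMonomialIdeal I) (a : σ →₀ ℕ) :
    IsMonomialIdeal (I.colon (Ideal.span {monomial a (1 : R)})) := by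
  intro f hf m hm
  rw [Ideal.mem_colon_span_singleton] at hf ⊢
  have hma : m + a ∈ (f * monomial a 1).support := by
    simpa [coeff_mul_monomial] using hm
  simpa [monomial_mul] using hI hf _ hma

end IsMonomialIdeal

theorem isMonomialIdeal_span_monomial_image (S : Set (σ →₀ ℕ)) :
    IsMonomialIdeal (Ideal.span ((fun s => monomial s (1 : R)) '' S)) := by
  intro f hf m hm
  obtain ⟨d, hdS, hdm⟩ := mem_ideal_span_monomial_image.1 hf m hm
  refine mem_ideal_span_monomial_image.2 fun n hn => ⟨d, hdS, ?_⟩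
  rwa [Finset.mem_singleton.1 (support_monomial_subset hn)]

theorem isMonomialIdeal_span_X_image (s : Set σ) :
    IsMonomialIdeal (Ideal.span (X '' s : Set (MvPolynomial σ R))) := by
  have := isMonomialIdeal_span_monomial_image (R := R) ((Finsupp.single · 1) '' s)
  rwa [Set.image_image] at this

theorem X_mul_X_eq_monomial (u v : σ) :
    (X u * X v : MvPolynomial σ R) = monomial (Finsupp.single u 1 + Finsupp.single v 1) 1 := by
  rw [X, X, monomial_mul, one_mul]

theorem monomial_mem_colon_span_monomial_iff {I : Ideal (MvPolynomial σ R)} {m a : σ →₀ ℕ} :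
    monomial m (1 : R) ∈ I.colon (Ideal.span {monomial a (1 : R)}) ↔ monomial (m + a) 1 ∈ I := by
  rw [Ideal.mem_colon_span_singleton, monomial_mul, one_mul]

theorem monomial_mem_span_X_image_iff [Nontrivial R] {s : Set σ} {m : σ →₀ ℕ} :
    monomial m (1 : R) ∈ Ideal.span (X '' s) ↔ ¬ Disjoint s m.support := by
  classical
  rw [mem_ideal_span_X_image, support_monomial, if_neg one_ne_zero, Set.not_disjoint_iff]
  simp

end MvPolynomial

theorem Finsupp.single_add_single_le_iff {σ : Type*} {u v : σ} (huv : u ≠ v) {m : σ →₀ ℕ} :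
    Finsupp.single u 1 + Finsupp.single v 1 ≤ m ↔ u ∈ m.support ∧ v ∈ m.support := by
  classical
  simp only [Finsupp.le_def, Finsupp.add_apply, Finsupp.single_apply, Finsupp.mem_support_iff]
  refine ⟨fun h => ⟨?_, ?_⟩, fun ⟨hu, hv⟩ w => ?_⟩
  · have := h u
    rw [if_pos rfl, if_neg huv.symm] at this
    omega
  · have := h v
    rw [if_neg huv, if_pos rfl] at this
    omega
  · by_cases hwu : u = w <;> by_cases hwv : v = w <;> simp_all <;> omega

section EdgeIdeal

variable {k : Type*} [Field k] {V : Type*}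

theorem edgeIdeal_eq_span_monomial_image (G : SimpleGraph V) :
    edgeIdeal k G = Ideal.span ((fun d => monomial d (1 : k)) ''
      {d | ∃ u v, G.Adj u v ∧ d = Finsupp.single u 1 + Finsupp.single v 1}) := by
  rw [edgeIdeal]
  congr 1
  ext p
  simp [X_mul_X_eq_monomial, eq_comm]

theorem isMonomialIdeal_edgeIdeal (G : SimpleGraph V) : IsMonomialIdeal (edgeIdeal k G) := by
  rw [edgeIdeal_eq_span_monomial_image]
  exact isMonomialIdeal_span_monomial_image _

theorem monomial_mem_edgeIdeal_iff (G : SimpleGraph V) {m : V →₀ ℕ} :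
    monomial m (1 : k) ∈ edgeIdeal k G ↔ ¬ G.IsIndepSet m.support := by
  classical
  rw [edgeIdeal_eq_span_monomial_image, mem_ideal_span_monomial_image, support_monomial,
    if_neg one_ne_zero, SimpleGraph.isIndepSet_iff]
  simp only [Finset.mem_singleton, forall_eq, Set.Pairwise, Finset.mem_coe,
    not_forall, not_not]
  constructor
  · rintro ⟨_, ⟨u, v, huv, rfl⟩, hle⟩
    obtain ⟨hu, hv⟩ := (Finsupp.single_add_single_le_iff huv.ne).1 hle
    exact ⟨u, hu, v, hv, huv.ne, huv⟩
  · rintro ⟨u, hu, v, hv, -, huv⟩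
    exact ⟨_, ⟨u, v, huv, rfl⟩, (Finsupp.single_add_single_le_iff huv.ne).2 ⟨hu, hv⟩⟩

end EdgeIdeal

theorem SimpleGraph.isIndepSet_deleteEdges_insert_insert_iff {V : Type*} {G H : SimpleGraph V}
    {x y : V} (hxy : G.Adj x y)
    (hH : ∀ u v : V, H.Adj u v ↔ (G.Adj u v ∧
      u ∉ G.neighborSet x ∪ G.neighborSet y ∧ v ∉ G.neighborSet x ∪ G.neighborSet y))
    (s : Set V) :
    (G.deleteEdges {s(x, y)}).IsIndepSet (insert x (insert y s)) ↔
      Disjoint s ((G.neighborSet x ∪ G.neighborSet y) \ {x, y}) ∧ H.IsIndepSet s := by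
  set N := G.neighborSet x ∪ G.neighborSet y
  have hyN : y ∈ N := Or.inl hxy
  have hxN : x ∈ N := Or.inr hxy.symm
  simp only [isIndepSet_iff, Set.Pairwise, deleteEdges_adj, Set.mem_singleton_iff, not_and,
    not_not]
  constructor
  · intro hind
    refine ⟨Set.disjoint_left.2 fun w hws ⟨hwN, hwxy⟩ => ?_, fun u hu v hv huv hadj => ?_⟩
    · rcases hwN with hwx | hwy
      · exact hwxy (Or.inr (Sym2.congr_right.1 (hind (.inl rfl) (.inr (.inr hws))
          (fun h => hwxy (.inl h.symm)) hwx)))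
      · refine hwxy (Or.inl ((Sym2.congr_right (a := y)).1 ?_))
        rw [hind (.inr (.inl rfl)) (.inr (.inr hws)) (fun h => hwxy (.inr h.symm)) hwy,
          Sym2.eq_swap]
    · obtain ⟨hG, huN, -⟩ := (hH u v).1 hadj
      rcases Sym2.eq_iff.1 (hind (.inr (.inr hu)) (.inr (.inr hv)) huv hG) with
        ⟨rfl, -⟩ | ⟨rfl, -⟩
      exacts [huN hxN, huN hyN]
  · rintro ⟨hdisj, hindH⟩ u hu v hv huv hG
    have hout : ∀ w ∈ s, w ∈ N → w = x ∨ w = y := fun w hws hwN => by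
      by_contra hwxy
      exact Set.disjoint_left.1 hdisj hws ⟨hwN, hwxy⟩
    have hnbr : ∀ a b, b ∈ insert x (insert y s) → G.Adj a b → (a = x ∨ a = y) →
        b = x ∨ b = y := by
      rintro a b (rfl | rfl | hbs) hab ha
      exacts [.inl rfl, .inr rfl,
        hout b hbs (by rcases ha with rfl | rfl; exacts [.inl hab, .inr hab])]
    by_cases hu' : u = x ∨ u = y
    · rcases hu' with rfl | rfl <;> rcases hnbr _ v hv hG (by simp) with rfl | rfl
      exacts [absurd rfl huv, rfl, Sym2.eq_swap, absurd rfl huv]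
    by_cases hv' : v = x ∨ v = y
    · exact absurd (hnbr v u hu hG.symm hv') hu'
    have hus : u ∈ s := by rcases hu with rfl | rfl | hu <;> tauto
    have hvs : v ∈ s := by rcases hv with rfl | rfl | hv <;> tauto
    exact absurd ((hH u v).2 ⟨hG, fun h => hu' (hout u hus h), fun h => hv' (hout v hvs h)⟩)
      (hindH hus hvs huv)

/-- For an edge `e = xy` of `G`, with `L` the ideal generated by the variables in
`(N(x) ∪ N(y)) \ {x, y}` and `H` the induced subgraph of `G` on `V(G) \ (N(x) ∪ N(y))`,
one has `I(G \ e) : (xy) = L + I(H)`. -/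
theorem colon_edgeIdeal_deleteEdge {k : Type*} [Field k] {V : Type*}
    (G : SimpleGraph V) (x y : V) (hxy : G.Adj x y)
    (H : SimpleGraph V)
    (hH : ∀ u v : V, H.Adj u v ↔ (G.Adj u v ∧
      u ∉ G.neighborSet x ∪ G.neighborSet y ∧ v ∉ G.neighborSet x ∪ G.neighborSet y)) :
    (edgeIdeal k (G.deleteEdges {s(x, y)})).colon
        (Ideal.span {(X x * X y : MvPolynomial V k)}) =
      Ideal.span (MvPolynomial.X '' ((G.neighborSet x ∪ G.neighborSet y) \ {x, y}))
        + edgeIdeal k H := by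
  classical
  have hspanX :=
    isMonomialIdeal_span_X_image (R := k) ((G.neighborSet x ∪ G.neighborSet y) \ {x, y})
  rw [X_mul_X_eq_monomial, Submodule.add_eq_sup]
  refine ((isMonomialIdeal_edgeIdeal _).colon_monomial _).ext
    (hspanX.sup (isMonomialIdeal_edgeIdeal H)) fun m => ?_
  have hsupp : ((m + (Finsupp.single x 1 + Finsupp.single y 1)).support : Set V) =
      insert x (insert y (m.support : Set V)) := by
    ext w
    simp [Finsupp.support_add_eq_union]
  rw [monomial_mem_colon_span_monomial_iff, monomial_mem_edgeIdeal_iff, hsupp,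
    hspanX.monomial_mem_sup_iff (isMonomialIdeal_edgeIdeal H), monomial_mem_span_X_image_iff,
    monomial_mem_edgeIdeal_iff, SimpleGraph.isIndepSet_deleteEdges_insert_insert_iff hxy hH,
    disjoint_comm, not_and_or]
end

section
/- Let G be a graph with inmat(G) = 1 and e = xy an edge of G. Then every edge of G \ e contains a neighbor of x or a neighbor of y; consequently I(G \ e) : (xy) = (y_1,...,y_p) where y_1,...,y_p are the elements of (N(x) ∪ N(y)) \ {x,y}. -/
/-!
If an edge `uv` of `G \ xy` missed `N(x) ∪ N(y)`, then `{xy, uv}` would be an induced matching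
of size two. So every edge of `G \ xy` has an endpoint in `T = (N(x) ∪ N(y)) \ {x, y}`, i.e.
`I(G \ xy)` lies in the ideal `(T)` generated by the variables of `T`. Membership in `(T)` is
decided monomial by monomial, and multiplying by `xy` does not touch the exponents of `T`;
hence `I(G \ xy) : xy ⊆ (T)`. Conversely every `t ∈ T` is adjacent to `x` or `y` in `G \ xy`,
so `t · xy ∈ I(G \ xy)`.
-/

open MvPolynomial

/-- `M` is an induced matching of `G`: a set of pairwise vertex-disjoint edges of `G` such
that the only edges of `G` between vertices covered by `M` are the edges of `M` themselves. -/
def SimpleGraph.IsInducedMatching {V : Type*} (G : SimpleGraph V) (M : Finset (Sym2 V)) : Prop :=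
  (↑M : Set (Sym2 V)) ⊆ G.edgeSet ∧
  (∀ e ∈ M, ∀ f ∈ M, e ≠ f → ∀ u : V, u ∈ e → u ∉ f) ∧
  (∀ u v : V, (∃ e ∈ M, u ∈ e) → (∃ f ∈ M, v ∈ f) → G.Adj u v → s(u, v) ∈ M)

/-- The induced matching number of `G`: the largest size of an induced matching. -/
noncomputable def SimpleGraph.inducedMatchingNumber {V : Type*} (G : SimpleGraph V) : ℕ :=
  sSup {n : ℕ | ∃ M : Finset (Sym2 V), G.IsInducedMatching M ∧ M.card = n}

theorem MvPolynomial.mul_X_mem_span_X_image_iff {σ R : Type*} [CommSemiring R]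
    {p : MvPolynomial σ R} {s : Set σ} {i : σ} (hi : i ∉ s) :
    p * X i ∈ Ideal.span (X '' s) ↔ p ∈ Ideal.span (X '' s) := by
  rw [mem_ideal_span_X_image, mem_ideal_span_X_image, support_mul_X, Finset.forall_mem_map]
  refine forall₂_congr fun m _ => exists_congr fun j => and_congr_right fun hj => ?_
  have hji : j ≠ i := fun h => hi (h ▸ hj)
  simp [hji.symm]

namespace SimpleGraph

variable {V : Type*} {G : SimpleGraph V}

theorem card_le_inducedMatchingNumber {M : Finset (Sym2 V)} (hM : G.IsInducedMatching M)
    (h0 : G.inducedMatchingNumber ≠ 0) : M.card ≤ G.inducedMatchingNumber := by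
  -- an unbounded set of sizes would have `sSup = 0`
  have hbdd : BddAbove {n | ∃ M : Finset (Sym2 V), G.IsInducedMatching M ∧ M.card = n} := by
    by_contra hunb
    exact h0 (by rw [inducedMatchingNumber, csSup_of_not_bddAbove hunb, csSup_empty]; rfl)
  exact le_csSup hbdd ⟨M, hM, rfl⟩

theorem isInducedMatching_pair [DecidableEq V] {x y u v : V} (hxy : G.Adj x y) (huv : G.Adj u v)
    (hu : u ∉ G.neighborSet x ∪ G.neighborSet y)
    (hv : v ∉ G.neighborSet x ∪ G.neighborSet y) :
    G.IsInducedMatching {s(x, y), s(u, v)} := by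
  simp only [Set.mem_union, mem_neighborSet, not_or] at hu hv
  refine ⟨by simp [Set.insert_subset_iff, hxy, huv], ?_, ?_⟩
  all_goals
    simp only [Finset.mem_insert, Finset.mem_singleton]
    grind [G.adj_symm, SimpleGraph.irrefl]

theorem mem_neighborSet_union_of_deleteEdges_adj {x y : V} (hxy : G.Adj x y)
    (hmat : G.inducedMatchingNumber = 1) {u v : V} (huv : (G.deleteEdges {s(x, y)}).Adj u v) :
    u ∈ G.neighborSet x ∪ G.neighborSet y ∨ v ∈ G.neighborSet x ∪ G.neighborSet y := by
  classical
  by_contra! h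
  have hM := G.isInducedMatching_pair hxy (deleteEdges_adj.mp huv).1 h.1 h.2
  have hne : s(x, y) ≠ s(u, v) := fun he => (deleteEdges_adj.mp huv).2 he.symm
  have := card_le_inducedMatchingNumber hM (by omega)
  rw [Finset.card_pair hne] at this
  omega

theorem mem_sdiff_of_deleteEdges_adj {x y u v : V} (huv : (G.deleteEdges {s(x, y)}).Adj u v)
    (hu : u ∈ G.neighborSet x ∪ G.neighborSet y) :
    u ∈ (G.neighborSet x ∪ G.neighborSet y) \ {x, y} ∨
      v ∈ (G.neighborSet x ∪ G.neighborSet y) \ {x, y} := by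
  rw [deleteEdges_adj] at huv
  simp only [Set.mem_sdiff, Set.mem_union, mem_neighborSet, Set.mem_insert_iff,
    Set.mem_singleton_iff, Sym2.eq_iff] at hu huv ⊢
  grind [G.adj_symm, SimpleGraph.irrefl]

theorem deleteEdges_adj_of_mem_sdiff {x y z : V}
    (hz : z ∈ (G.neighborSet x ∪ G.neighborSet y) \ {x, y}) :
    (G.deleteEdges {s(x, y)}).Adj z x ∨ (G.deleteEdges {s(x, y)}).Adj z y := by
  simp only [Set.mem_sdiff, Set.mem_union, mem_neighborSet, Set.mem_insert_iff,
    Set.mem_singleton_iff] at hz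
  simp only [deleteEdges_adj, Set.mem_singleton_iff, Sym2.eq_iff]
  grind [G.adj_symm]

end SimpleGraph

section EdgeIdeal

variable {k V : Type*} [Field k] {H : SimpleGraph V}

theorem edgeIdeal_le_span_X_image {s : Set V} (hs : ∀ u v, H.Adj u v → u ∈ s ∨ v ∈ s) :
    edgeIdeal k H ≤ Ideal.span (X '' s) := by
  rw [edgeIdeal, Ideal.span_le]
  rintro _ ⟨u, v, huv, rfl⟩
  rcases hs u v huv with hu | hv
  · exact Ideal.mul_mem_right _ _ (Ideal.subset_span ⟨u, hu, rfl⟩)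
  · exact Ideal.mul_mem_left _ _ (Ideal.subset_span ⟨v, hv, rfl⟩)

theorem edgeIdeal_colon_le_span_X_image {s : Set V} {x y : V}
    (hs : ∀ u v, H.Adj u v → u ∈ s ∨ v ∈ s) (hx : x ∉ s) (hy : y ∉ s) :
    (edgeIdeal k H).colon (Ideal.span {(X x * X y : MvPolynomial V k)}) ≤
      Ideal.span (X '' s) := by
  intro p hp
  rw [Ideal.mem_colon_span_singleton, ← mul_assoc] at hp
  rw [← mul_X_mem_span_X_image_iff hx, ← mul_X_mem_span_X_image_iff hy]
  exact edgeIdeal_le_span_X_image hs hp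

theorem X_mem_edgeIdeal_colon_of_adj_left {x y z : V} (h : H.Adj z x) :
    X z ∈ (edgeIdeal k H).colon (Ideal.span {(X x * X y : MvPolynomial V k)}) := by
  rw [Ideal.mem_colon_span_singleton, ← mul_assoc]
  exact Ideal.mul_mem_right _ _ (Ideal.subset_span ⟨z, x, h, rfl⟩)

theorem X_mem_edgeIdeal_colon_of_adj_right {x y z : V} (h : H.Adj z y) :
    X z ∈ (edgeIdeal k H).colon (Ideal.span {(X x * X y : MvPolynomial V k)}) := by
  rw [mul_comm (X x)]
  exact X_mem_edgeIdeal_colon_of_adj_left h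

end EdgeIdeal

/-- If `inmat(G) = 1` and `e = xy` is an edge of `G`, then every edge of
`G \ e` contains a neighbor of `x` or of `y`; consequently `I(G \ e) : (xy)` is generated by
the variables in `(N(x) ∪ N(y)) \ {x, y}`. -/
theorem colon_edgeIdeal_of_inmat_one {k : Type*} [Field k] {V : Type*}
    (G : SimpleGraph V) (x y : V) (hxy : G.Adj x y)
    (hmat : G.inducedMatchingNumber = 1) :
    (∀ u v : V, (G.deleteEdges {s(x, y)}).Adj u v →
        u ∈ G.neighborSet x ∪ G.neighborSet y ∨ v ∈ G.neighborSet x ∪ G.neighborSet y) ∧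
    (edgeIdeal k (G.deleteEdges {s(x, y)})).colon
        (Ideal.span {(X x * X y : MvPolynomial V k)}) =
      Ideal.span (MvPolynomial.X '' ((G.neighborSet x ∪ G.neighborSet y) \ {x, y})) := by
  refine ⟨fun _ _ => G.mem_neighborSet_union_of_deleteEdges_adj hxy hmat, le_antisymm ?_ ?_⟩
  · refine edgeIdeal_colon_le_span_X_image (fun u v huv => ?_) (by simp) (by simp)
    rcases G.mem_neighborSet_union_of_deleteEdges_adj hxy hmat huv with hu | hv
    · exact G.mem_sdiff_of_deleteEdges_adj huv hu
    · exact (G.mem_sdiff_of_deleteEdges_adj huv.symm hv).symm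
  · rw [Ideal.span_le]
    rintro _ ⟨z, hz, rfl⟩
    rcases G.deleteEdges_adj_of_mem_sdiff hz with h | h
    · exact X_mem_edgeIdeal_colon_of_adj_left h
    · exact X_mem_edgeIdeal_colon_of_adj_right h
end
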